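/- arXiv:1704.07408 — 2 statements merged into one kernel-verified Lean document; each statement's English description precedes it below -/
import Mathlib

section
/- Let X be an SLT space. Then X is homotopically Hausdorff (i.e., homotopically Hausdorff relative to the trivial subgroup) if and only if π₁^wh(X, x₀) is a T₀ space. -/
open Set TopologicalSpace unitInterval

universe u

namespace SLTF

attribute [local instance] Path.Homotopic.setoid

variable {X : Type u} [TopologicalSpace X]

/-- The homotopy class of a loop as an element of the fundamental group. -/
noncomputable def fl {x : X} (γ : Path x x) : FundamentalGroup X x :=
  @FundamentalGroup.fromPath X _ x ⟦γ⟧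

/-- Multiplication of fundamental-group elements in path-concatenation order:
`pmul a b` is the class of "`a` followed by `b`". -/
noncomputable def pmul {x : X} (a b : FundamentalGroup X x) : FundamentalGroup X x :=
  @FundamentalGroup.fromPath X _ x
    (Path.Homotopic.Quotient.trans (@FundamentalGroup.toPath X _ x a)
      (@FundamentalGroup.toPath X _ x b))

/-- A path in `X` starting at the base point `x`, recorded together with its end point. -/
structure PPath (X : Type u) [TopologicalSpace X] (x : X) where
  target : X
  path : Path x target

/-- Two paths starting at `x` are identified when they have the same end point and the
class of `α ⬝ β⁻¹` satisfies the predicate `P` (e.g. membership in a subgroup `H`). -/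
def HRel (x : X) (P : Path x x → Prop) (α β : PPath X x) : Prop :=
  ∃ h : α.target = β.target, P (α.path.trans ((β.path.cast rfl h).symm))

/-- The set `X̃` of `P`-equivalence classes of paths starting at `x`. -/
def Xtilde (x : X) (P : Path x x → Prop) : Type u := Quot (HRel x P)

/-- The class of a path in `X̃`. -/
def mkX (x : X) (P : Path x x → Prop) (α : PPath X x) : Xtilde x P := Quot.mk _ α

/-- The basic whisker-open set `([α], U)`: all classes of prolongations of `α` by a path in `U`. -/
def whBasic (x : X) (P : Path x x → Prop) (α : PPath X x) (U : Set X) : Set (Xtilde x P) :=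
  { q | ∃ (y : X) (β : Path α.target y), range ⇑β ⊆ U ∧ q = mkX x P ⟨y, α.path.trans β⟩ }

/-- The whisker topology on `X̃`, generated by the sets `([α], U)` for `U` an open
neighbourhood of the end point of `α`. -/
instance whTop (x : X) (P : Path x x → Prop) : TopologicalSpace (Xtilde x P) :=
  generateFrom
    { S | ∃ (α : PPath X x) (U : Set X), IsOpen U ∧ α.target ∈ U ∧ S = whBasic x P α U }

/-- The endpoint projection `p : X̃ → X`. -/
def endpt (x : X) (P : Path x x → Prop) : Xtilde x P → X :=
  Quot.lift (fun α => α.target) (fun _ _ h => h.elim fun e _ => e)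

/-- The space of paths in `X` starting at `x`, with the compact-open topology. -/
def PSp (X : Type u) [TopologicalSpace X] (x : X) : Type u := { f : C(I, X) // f 0 = x }

instance (x : X) : TopologicalSpace (PSp X x) := instTopologicalSpaceSubtype

/-- The natural surjection from the path space onto `X̃`. -/
def toXt (x : X) (P : Path x x → Prop) : PSp X x → Xtilde x P :=
  fun f => mkX x P ⟨f.1 1, ⟨f.1, f.2, rfl⟩⟩

/-- The quotient of the compact-open topology on `X̃`. -/
def topTop (x : X) (P : Path x x → Prop) : TopologicalSpace (Xtilde x P) :=
  coinduced (toXt x P) inferInstance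

/-- Membership in a subgroup `H`, as a predicate on loops. -/
noncomputable def loopMem (x : X) (H : Subgroup (FundamentalGroup X x)) : Path x x → Prop :=
  fun γ => fl γ ∈ H

/-- `X̃_H`, the classes of paths starting at `x₀` modulo `H`. -/
abbrev XtildeH (x₀ : X) (H : Subgroup (FundamentalGroup X x₀)) : Type u :=
  Xtilde x₀ (loopMem x₀ H)

/-- The fiber of the endpoint projection over `y`, with the subspace (whisker) topology. -/
abbrev Fib (x : X) (P : Path x x → Prop) (y : X) : Type u :=
  { q : Xtilde x P // endpt x P q = y }

/-- The class in the fiber over `y` of a path from `x` to `y`. -/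
def mkFib (x : X) (P : Path x x → Prop) {y : X} (δ : Path x y) : Fib x P y :=
  ⟨mkX x P ⟨y, δ⟩, rfl⟩

/-- The whisker topology on the fundamental group `π₁(X, x)`: basic neighbourhoods of `a`
are the sets `{a ⋆ [γ] : γ a loop in U at x}` for `U` an open neighbourhood of `x`. -/
noncomputable def whPi1 (x : X) : TopologicalSpace (FundamentalGroup X x) :=
  generateFrom
    { S | ∃ (a : FundamentalGroup X x) (U : Set X), IsOpen U ∧ x ∈ U ∧
        S = { b | ∃ γ : Path x x, range ⇑γ ⊆ U ∧ b = pmul a (fl γ) } }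

/-- The quotient topology on `π₁(X, x)` induced from the loop space with the
compact-open topology. -/
noncomputable def qtopPi1 (x : X) : TopologicalSpace (FundamentalGroup X x) :=
  coinduced (fun γ : Path x x => fl γ) inferInstance

/-- `X` is `H`-SLT at `x₀`. -/
noncomputable def IsHSLTAt (x₀ : X) (H : Subgroup (FundamentalGroup X x₀)) : Prop :=
  ∀ (y : X) (α : Path x₀ y) (U : Set X), IsOpen U → x₀ ∈ U →
    ∃ V : Set X, IsOpen V ∧ y ∈ V ∧
      ∀ β : Path y y, range ⇑β ⊆ V →
        ∃ γ : Path x₀ x₀, range ⇑γ ⊆ U ∧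
          fl ((α.trans (β.trans α.symm)).trans γ.symm) ∈ H

/-- `X` is SLT at `x`. -/
def IsSLTAt (X : Type u) [TopologicalSpace X] (x : X) : Prop :=
  ∀ (y : X) (α : Path x y) (U : Set X), IsOpen U → x ∈ U →
    ∃ V : Set X, IsOpen V ∧ y ∈ V ∧
      ∀ β : Path y y, range ⇑β ⊆ V →
        ∃ γ : Path x x, range ⇑γ ⊆ U ∧ (α.trans (β.trans α.symm)).Homotopic γ

/-- `X` is an SLT space. -/
def IsSLT (X : Type u) [TopologicalSpace X] : Prop := ∀ x : X, IsSLTAt X x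

/-- `α` (a path from `x` to `y`) is an `H`-SLT path: for every path `lam` from `x₀` to `x`
and open `U ∋ x` there is an open `V ∋ y` such that every loop `β` in `V` at `y` transfers
to a loop `γ` in `U` at `x` with `[α ⋆ β ⋆ α⁻¹ ⋆ γ⁻¹] ∈ [lam⁻¹ H lam]`, i.e.
`[lam ⋆ (α ⋆ β ⋆ α⁻¹ ⋆ γ⁻¹) ⋆ lam⁻¹] ∈ H`. -/
noncomputable def IsHSLTPath (x₀ : X) (H : Subgroup (FundamentalGroup X x₀)) {x y : X}
    (α : Path x y) : Prop :=
  ∀ (lam : Path x₀ x) (U : Set X), IsOpen U → x ∈ U →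
    ∃ V : Set X, IsOpen V ∧ y ∈ V ∧
      ∀ β : Path y y, range ⇑β ⊆ V →
        ∃ γ : Path x x, range ⇑γ ⊆ U ∧
          fl (lam.trans ((((α.trans (β.trans α.symm)).trans γ.symm)).trans lam.symm)) ∈ H

/-- `X` is an `H`-SLT space: for every `x` and every path `lam` from `x₀` to `x`, `X` is
`[lam⁻¹ H lam]`-SLT at `x`. -/
noncomputable def IsHSLTSpace (x₀ : X) (H : Subgroup (FundamentalGroup X x₀)) : Prop :=
  ∀ (x y : X) (α : Path x y), IsHSLTPath x₀ H α

/-- Membership in the conjugate subgroup `[lam⁻¹ H lam]` of `π₁(X, x)`,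
as a predicate on loops at `x`. -/
noncomputable def conjMem (x₀ : X) (H : Subgroup (FundamentalGroup X x₀)) {x : X}
    (lam : Path x₀ x) : Path x x → Prop :=
  fun δ => fl (lam.trans (δ.trans lam.symm)) ∈ H

/-- `X` is homotopically Hausdorff relative to `H`. -/
noncomputable def HomHausdorffRel (x₀ : X) (H : Subgroup (FundamentalGroup X x₀)) : Prop :=
  ∀ (y : X) (α : Path x₀ y) (g : FundamentalGroup X x₀), g ∉ H →
    ∃ U : Set X, IsOpen U ∧ y ∈ U ∧
      ∀ γ : Path y y, range ⇑γ ⊆ U →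
        ¬ ∃ h ∈ H, fl (α.trans (γ.trans α.symm)) = pmul h g

/-- `X` is homotopically path Hausdorff relative to `H`. -/
noncomputable def HomPathHausdorffRel (x₀ : X) (H : Subgroup (FundamentalGroup X x₀)) : Prop :=
  ∀ (y : X) (α β : Path x₀ y), fl (α.trans β.symm) ∉ H →
    ∃ (n : ℕ) (t : Fin (n + 1) → I) (U : Fin n → Set X),
      t 0 = 0 ∧ t (Fin.last n) = 1 ∧ StrictMono t ∧
      (∀ i : Fin n, IsOpen (U i)) ∧
      (∀ i : Fin n, ⇑α '' Set.Icc (t i.castSucc) (t i.succ) ⊆ U i) ∧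
      ∀ γ : Path x₀ y,
        (∀ i : Fin n, ⇑γ '' Set.Icc (t i.castSucc) (t i.succ) ⊆ U i) →
        (∀ i : Fin (n + 1), γ (t i) = α (t i)) →
        fl (γ.trans β.symm) ∉ H

/-- The endpoint projection `p : X̃ → X` (with the whisker topology on `X̃`) has the
unique path lifting property. -/
def UPLP (x : X) (P : Path x x → Prop) : Prop :=
  ∀ g₁ g₂ : C(I, Xtilde x P), g₁ 0 = g₂ 0 →
    (∀ t, endpt x P (g₁ t) = endpt x P (g₂ t)) → g₁ = g₂

/-- A semicovering map: a local homeomorphism with (continuous) unique lifting of paths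
and of homotopies. -/
structure IsSemicovering {Y : Type u} [TopologicalSpace Y] (p : Y → X) : Prop where
  localHomeo : IsLocalHomeomorph p
  pathLift : ∀ (y : Y) (γ : C(I, X)), γ 0 = p y →
    ∃! γh : C(I, Y), γh 0 = y ∧ ∀ t, p (γh t) = γ t
  contPathLift : ∀ y : Y, ∃ L : { γ : C(I, X) // γ 0 = p y } → C(I, Y),
    Continuous L ∧ ∀ γ, (L γ) 0 = y ∧ ∀ t, p ((L γ) t) = (γ : C(I, X)) t
  homotopyLift : ∀ (y : Y) (Φ : C(I × I, X)), Φ (0, 0) = p y →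
    ∃! Φh : C(I × I, Y), Φh (0, 0) = y ∧ ∀ z, p (Φh z) = Φ z
  contHomotopyLift : ∀ y : Y, ∃ L : { Φ : C(I × I, X) // Φ (0, 0) = p y } → C(I × I, Y),
    Continuous L ∧ ∀ Φ, (L Φ) (0, 0) = y ∧ ∀ z, p ((L Φ) z) = (Φ : C(I × I, X)) z

/-- An `lpc₀`-covering map with `p₊π₁(Y, ·) = H`: a map which is equivalent, as a map
over `X`, to the endpoint projection `p_H : X̃_H → X` having the unique path lifting
property (with `Y` path connected and locally path connected). -/
structure IsLpc0Covering {Y : Type u} [TopologicalSpace Y] (p : Y → X) (x₀ : X)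
    (H : Subgroup (FundamentalGroup X x₀)) : Prop where
  pathConnected : PathConnectedSpace Y
  locPathConnected : LocPathConnectedSpace Y
  uplp : UPLP x₀ (loopMem x₀ H)
  equiv : ∃ φ : Y ≃ₜ XtildeH x₀ H, ∀ y, endpt x₀ (loopMem x₀ H) (φ y) = p y

/-- The homomorphism induced by `p` on fundamental groups, as a function. -/
noncomputable def pStar {Y : Type u} [TopologicalSpace Y] (p : C(Y, X)) (y₀ : Y) :
    FundamentalGroup Y y₀ → FundamentalGroup X (p y₀) :=
  fun g => @FundamentalGroup.fromPath X _ (p y₀)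
    (Path.Homotopic.Quotient.map (@FundamentalGroup.toPath Y _ y₀ g) p)


/-! In an SLT space a small loop at any point can be pushed along a path to a small loop at the
base point, so homotopical Hausdorffness reduces to the base point: no nontrivial `g ∈ π₁(X, x₀)`
is represented in every neighbourhood of `x₀`. That condition is exactly what separates `1`
from `g` in the whisker topology, and `π₁^wh` is homogeneous, so it is the `T₀` axiom. -/

open scoped Topology

section WhiskerTopology

variable {x : X}

lemma pmul_eq_mul (a b : FundamentalGroup X x) : pmul a b = b * a := rfl

lemma fl_refl : fl (Path.refl x) = 1 := rfl

lemma fl_trans (γ δ : Path x x) : fl (γ.trans δ) = fl δ * fl γ := rfl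

lemma fl_eq_of_homotopic {γ δ : Path x x} (h : γ.Homotopic δ) : fl γ = fl δ :=
  congrArg (@FundamentalGroup.fromPath X _ x) (Quotient.sound h)

lemma fl_symm (γ : Path x x) : fl γ.symm = (fl γ)⁻¹ := by
  refine eq_inv_of_mul_eq_one_left ?_
  rw [← fl_trans, fl_eq_of_homotopic ⟨(Path.Homotopy.reflTransSymm γ).symm⟩, fl_refl]

lemma fl_conj (α γ : Path x x) :
    fl (α.trans (γ.trans α.symm)) = (fl α)⁻¹ * fl γ * fl α := by
  rw [fl_trans, fl_trans, fl_symm, mul_assoc]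

def IsHomHausdorffAt (x : X) : Prop :=
  ∀ g : FundamentalGroup X x, g ≠ 1 →
    ∃ U : Set X, IsOpen U ∧ x ∈ U ∧ ∀ γ : Path x x, range ⇑γ ⊆ U → fl γ ≠ g

def whNbhd (a : FundamentalGroup X x) (U : Set X) : Set (FundamentalGroup X x) :=
  { b | ∃ γ : Path x x, range ⇑γ ⊆ U ∧ b = pmul a (fl γ) }

lemma mem_whNbhd_iff {a b : FundamentalGroup X x} {U : Set X} :
    b ∈ whNbhd a U ↔ ∃ γ : Path x x, range ⇑γ ⊆ U ∧ fl γ = b * a⁻¹ :=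
  exists_congr fun _ => and_congr_right' <| by rw [pmul_eq_mul, eq_mul_inv_iff_mul_eq, eq_comm]

lemma self_mem_whNbhd (a : FundamentalGroup X x) {U : Set X} (hx : x ∈ U) : a ∈ whNbhd a U :=
  mem_whNbhd_iff.2 ⟨Path.refl x, by simpa using hx, by rw [fl_refl, mul_inv_cancel]⟩

lemma isOpen_whNbhd (a : FundamentalGroup X x) {U : Set X} (hU : IsOpen U) (hx : x ∈ U) :
    IsOpen[whPi1 x] (whNbhd a U) :=
  GenerateOpen.basic _ ⟨a, U, hU, hx, rfl⟩

lemma whNbhd_trans_subset (a : FundamentalGroup X x) {U : Set X} {γ : Path x x}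
    (hγ : range ⇑γ ⊆ U) : whNbhd (pmul a (fl γ)) U ⊆ whNbhd a U := by
  rintro _ ⟨δ, hδ, rfl⟩
  refine ⟨γ.trans δ, Path.trans_range γ δ ▸ union_subset hγ hδ, ?_⟩
  rw [pmul_eq_mul, pmul_eq_mul, pmul_eq_mul, fl_trans, mul_assoc]

lemma exists_whNbhd_subset {O : Set (FundamentalGroup X x)} (hO : IsOpen[whPi1 x] O)
    {a : FundamentalGroup X x} (ha : a ∈ O) :
    ∃ U : Set X, IsOpen U ∧ x ∈ U ∧ whNbhd a U ⊆ O := by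
  induction hO generalizing a with
  | basic S hS =>
    obtain ⟨b, U, hU, hxU, rfl⟩ := hS
    obtain ⟨γ, hγ, rfl⟩ := ha
    exact ⟨U, hU, hxU, whNbhd_trans_subset b hγ⟩
  | univ => exact ⟨univ, isOpen_univ, mem_univ x, subset_univ _⟩
  | inter s t _ _ ihs iht =>
    obtain ⟨U, hU, hxU, hUs⟩ := ihs ha.1
    obtain ⟨V, hV, hxV, hVt⟩ := iht ha.2
    refine ⟨U ∩ V, hU.inter hV, ⟨hxU, hxV⟩, fun b hb => ⟨hUs ?_, hVt ?_⟩⟩ <;>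
      obtain ⟨γ, hγ, rfl⟩ := hb
    exacts [⟨γ, hγ.trans inter_subset_left, rfl⟩, ⟨γ, hγ.trans inter_subset_right, rfl⟩]
  | sUnion S _ ih =>
    obtain ⟨s, hsS, has⟩ := ha
    obtain ⟨U, hU, hxU, hUs⟩ := ih s hsS has
    exact ⟨U, hU, hxU, hUs.trans (subset_sUnion_of_mem hsS)⟩

theorem t0Space_whPi1_iff : @T0Space _ (whPi1 x) ↔ IsHomHausdorffAt x := by
  let _ := whPi1 x
  rw [t0Space_iff_exists_isOpen_xor_mem]
  constructor
  · intro hT g hg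
    obtain ⟨O, hO, hsep⟩ := @hT 1 g (Ne.symm hg)
    -- whichever of `1`, `g` lies in `O`, a small loop representing `g` would drag the other in
    rcases hsep with ⟨h1, hg'⟩ | ⟨hg', h1⟩
    · obtain ⟨U, hU, hxU, hUO⟩ := exists_whNbhd_subset hO h1
      refine ⟨U, hU, hxU, fun γ hγ hγg => hg' (hUO (mem_whNbhd_iff.2 ⟨γ, hγ, ?_⟩))⟩
      rw [hγg, inv_one, mul_one]
    · obtain ⟨U, hU, hxU, hUO⟩ := exists_whNbhd_subset hO hg'
      refine ⟨U, hU, hxU, fun γ hγ hγg => h1 (hUO (mem_whNbhd_iff.2 ⟨γ.symm, ?_, ?_⟩))⟩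
      · rwa [Path.symm_range]
      · rw [fl_symm, hγg, one_mul]
  · intro hH a b hab
    obtain ⟨U, hU, hxU, hUg⟩ := hH (b * a⁻¹) (mul_inv_eq_one.not.2 (Ne.symm hab))
    refine ⟨whNbhd a U, isOpen_whNbhd a hU hxU, Or.inl ⟨self_mem_whNbhd a hxU, ?_⟩⟩
    intro hb
    obtain ⟨γ, hγ, hγb⟩ := mem_whNbhd_iff.1 hb
    exact hUg γ hγ hγb

end WhiskerTopology

lemma HomHausdorffRel.isHomHausdorffAt {x₀ : X} (h : HomHausdorffRel x₀ ⊥) :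
    IsHomHausdorffAt x₀ := by
  intro g hg
  obtain ⟨U, hU, hxU, hUg⟩ := h x₀ (Path.refl x₀) g (Subgroup.mem_bot.not.2 hg)
  refine ⟨U, hU, hxU, fun γ hγ hγg => hUg γ hγ ⟨1, Subgroup.one_mem _, ?_⟩⟩
  rw [fl_conj, fl_refl, hγg, pmul_eq_mul]
  group

lemma IsHomHausdorffAt.homHausdorffRel_bot {x₀ : X} (h : IsHomHausdorffAt x₀)
    (hslt : IsSLTAt X x₀) : HomHausdorffRel x₀ ⊥ := by
  intro y α g hg
  obtain ⟨W, hW, hxW, hWg⟩ := h g (Subgroup.mem_bot.not.1 hg)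
  obtain ⟨V, hV, hyV, hVW⟩ := hslt y α W hW hxW
  refine ⟨V, hV, hyV, fun β hβ ⟨k, hk, hβg⟩ => ?_⟩
  obtain ⟨γ, hγ, hαβγ⟩ := hVW β hβ
  rw [Subgroup.mem_bot.1 hk, pmul_eq_mul, mul_one] at hβg
  exact hWg γ hγ (fl_eq_of_homotopic hαβγ.symm |>.trans hβg)

theorem statement4_general {X : Type u} [TopologicalSpace X] (x₀ : X)
    (hslt : IsSLT X) :
    HomHausdorffRel x₀ (⊥ : Subgroup (FundamentalGroup X x₀)) ↔
      @T0Space (FundamentalGroup X x₀) (whPi1 x₀) :=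
  ⟨fun h => t0Space_whPi1_iff.2 h.isHomHausdorffAt,
    fun h => (t0Space_whPi1_iff.1 h).homHausdorffRel_bot (hslt x₀)⟩

/-- Let `X` be an SLT space. Then `X` is homotopically Hausdorff (i.e.
homotopically Hausdorff relative to the trivial subgroup) if and only if `π₁^wh(X, x₀)`
is a `T₀` space. -/
theorem statement4 {X : Type u} [TopologicalSpace X] [PathConnectedSpace X] (x₀ : X)
    (hslt : IsSLT X) :
    HomHausdorffRel x₀ (⊥ : Subgroup (FundamentalGroup X x₀)) ↔
      @T0Space (FundamentalGroup X x₀) (whPi1 x₀) :=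
  statement4_general x₀ hslt

end SLTF
end

section
/- Let H be a subgroup of π₁(X, x₀). Then X is an H-SLT space if and only if for every path α in X from x to y, the map f^α_H : (p_H⁻¹(y))^wh → (p_H⁻¹(x))^wh defined by f^α_H([δ]_H) = [δ⋆α⁻¹]_H is continuous. -/
open Set TopologicalSpace unitInterval

universe u

namespace SLTF

attribute [local instance] Path.Homotopic.setoid

variable {X : Type u} [TopologicalSpace X]

/-! The sets `([δ]_H, V)` form a neighbourhood basis of `[δ]_H` in the whisker topology. Hence
`f^α` is continuous at `[λ ⋆ α]_H` exactly when for every open `U ∋ x` there is an open `V ∋ y`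
such that each loop `β` in `V` at `y` can be traded for a loop `γ` in `U` at `x` with
`[λ ⋆ α ⋆ β ⋆ α⁻¹]_H = [λ ⋆ γ]_H`; unwinding `∼_H`, this is the `[λ⁻¹Hλ]`-SLT condition for `α`.
Every path `δ` ending at `y` is homotopic to `(δ ⋆ α⁻¹) ⋆ α`, so continuity of `f^α` everywhere
is the same as this condition for every `λ`. -/

open CategoryTheory Topology

section Whisker

def pathHom {a b : X} (p : Path a b) : FundamentalGroupoid.mk a ⟶ FundamentalGroupoid.mk b :=
  ⟦p⟧

@[simp] lemma pathHom_trans {a b c : X} (p : Path a b) (q : Path b c) :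
    pathHom (p.trans q) = pathHom p ≫ pathHom q := rfl

@[simp] lemma pathHom_refl (a : X) : pathHom (Path.refl a) = 𝟙 (FundamentalGroupoid.mk a) :=
  rfl

@[simp] lemma pathHom_symm {a b : X} (p : Path a b) : pathHom p.symm = inv (pathHom p) := by
  rw [← Groupoid.inv_eq_inv]; rfl

lemma fl_eq_iff {x : X} {γ₁ γ₂ : Path x x} : fl γ₁ = fl γ₂ ↔ pathHom γ₁ = pathHom γ₂ :=
  Iff.rfl

lemma fl_trans_s8 {x : X} (γ₁ γ₂ : Path x x) : fl (γ₁.trans γ₂) = fl γ₂ * fl γ₁ := rfl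

lemma fl_eq_one {x : X} {γ : Path x x} (h : pathHom γ = 𝟙 (FundamentalGroupoid.mk x)) :
    fl γ = 1 := h

variable {x₀ : X} {H : Subgroup (FundamentalGroup X x₀)}

lemma hRel_mk_iff {t : X} (p₁ p₂ : Path x₀ t) :
    HRel x₀ (loopMem x₀ H) ⟨t, p₁⟩ ⟨t, p₂⟩ ↔ fl (p₁.trans p₂.symm) ∈ H :=
  ⟨fun ⟨_, h⟩ => h, fun h => ⟨rfl, h⟩⟩

lemma equivalence_hRel : Equivalence (HRel x₀ (loopMem x₀ H)) where
  refl := by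
    rintro ⟨t, p⟩
    rw [hRel_mk_iff, fl_eq_one (by simp)]
    exact one_mem H
  symm := by
    rintro ⟨t, p₁⟩ ⟨s, p₂⟩ ⟨e, hp⟩
    obtain rfl : t = s := e
    have hinv : fl (p₂.trans p₁.symm) = (fl (p₁.trans p₂.symm))⁻¹ :=
      eq_inv_of_mul_eq_one_left (fl_eq_one (by simp))
    rw [hRel_mk_iff, hinv]
    exact inv_mem ((hRel_mk_iff p₁ p₂).mp ⟨rfl, hp⟩)
  trans := by
    rintro ⟨t, p₁⟩ ⟨s, p₂⟩ ⟨r, p₃⟩ ⟨e₁₂, hp₁₂⟩ ⟨e₂₃, hp₂₃⟩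
    obtain rfl : t = s := e₁₂
    obtain rfl : t = r := e₂₃
    have hsplit : fl (p₁.trans p₃.symm) = fl ((p₁.trans p₂.symm).trans (p₂.trans p₃.symm)) :=
      fl_eq_iff.mpr (by simp)
    rw [hRel_mk_iff, hsplit, fl_trans_s8]
    exact mul_mem ((hRel_mk_iff p₂ p₃).mp ⟨rfl, hp₂₃⟩) ((hRel_mk_iff p₁ p₂).mp ⟨rfl, hp₁₂⟩)

lemma mkX_eq_iff {t : X} (δ₁ δ₂ : Path x₀ t) :
    mkX x₀ (loopMem x₀ H) ⟨t, δ₁⟩ = mkX x₀ (loopMem x₀ H) ⟨t, δ₂⟩ ↔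
      fl (δ₁.trans δ₂.symm) ∈ H := by
  rw [← hRel_mk_iff]
  exact ⟨fun h => equivalence_hRel.eqvGen_iff.mp (Quot.eq.mp h), Quot.sound⟩

lemma target_eq_of_mkX_eq {a b : PPath X x₀}
    (h : mkX x₀ (loopMem x₀ H) a = mkX x₀ (loopMem x₀ H) b) : a.target = b.target :=
  congrArg (endpt x₀ (loopMem x₀ H)) h

lemma mkX_eq_of_pathHom_eq {t : X} {δ₁ δ₂ : Path x₀ t} (h : pathHom δ₁ = pathHom δ₂) :
    mkX x₀ (loopMem x₀ H) ⟨t, δ₁⟩ = mkX x₀ (loopMem x₀ H) ⟨t, δ₂⟩ := by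
  rw [mkX_eq_iff, fl_eq_one (by simp [h])]
  exact one_mem H

lemma mkX_trans_congr {t z : X} {δ₁ δ₂ : Path x₀ t}
    (h : mkX x₀ (loopMem x₀ H) ⟨t, δ₁⟩ = mkX x₀ (loopMem x₀ H) ⟨t, δ₂⟩) (β : Path t z) :
    mkX x₀ (loopMem x₀ H) ⟨z, δ₁.trans β⟩ = mkX x₀ (loopMem x₀ H) ⟨z, δ₂.trans β⟩ := by
  rw [mkX_eq_iff] at h ⊢
  rwa [fl_eq_iff.mpr (by simp : pathHom ((δ₁.trans β).trans (δ₂.trans β).symm) =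
    pathHom (δ₁.trans δ₂.symm))]

lemma fib_ind {t : X} (q : Fib x₀ (loopMem x₀ H) t) :
    ∃ δ : Path x₀ t, q = mkFib x₀ (loopMem x₀ H) δ := by
  obtain ⟨qv, hqv⟩ := q
  induction qv using Quot.ind with
  | mk a =>
    obtain ⟨s, p⟩ := a
    obtain rfl : s = t := hqv
    exact ⟨p, rfl⟩

lemma exists_fib_transport {x y : X} (α : Path x y) :
    ∃ f : Fib x₀ (loopMem x₀ H) y → Fib x₀ (loopMem x₀ H) x, ∀ δ : Path x₀ y,
      f (mkFib x₀ (loopMem x₀ H) δ) = mkFib x₀ (loopMem x₀ H) (δ.trans α.symm) := by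
  choose rep hrep using fun q : Fib x₀ (loopMem x₀ H) y => fib_ind q
  refine ⟨fun q => mkFib x₀ (loopMem x₀ H) ((rep q).trans α.symm), fun δ => ?_⟩
  have hδ : mkX x₀ (loopMem x₀ H) ⟨y, rep (mkFib x₀ (loopMem x₀ H) δ)⟩ =
      mkX x₀ (loopMem x₀ H) ⟨y, δ⟩ := congrArg Subtype.val (hrep _).symm
  exact Subtype.ext (mkX_trans_congr hδ α.symm)

lemma mkX_mem_whBasic_iff {s t : X} (ε : Path x₀ s) (δ : Path x₀ t) (U : Set X) :
    mkX x₀ (loopMem x₀ H) ⟨t, δ⟩ ∈ whBasic x₀ (loopMem x₀ H) ⟨s, ε⟩ U ↔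
      ∃ β : Path s t, range ⇑β ⊆ U ∧
        mkX x₀ (loopMem x₀ H) ⟨t, δ⟩ = mkX x₀ (loopMem x₀ H) ⟨t, ε.trans β⟩ := by
  refine ⟨?_, fun ⟨β, hβ, h⟩ => ⟨t, β, hβ, h⟩⟩
  rintro ⟨z, β, hβ, h⟩
  obtain rfl : t = z := target_eq_of_mkX_eq h
  exact ⟨β, hβ, h⟩

lemma forall_fib_mem_whBasic_iff {t : X} (δ : Path x₀ t) (V : Set X)
    (R : Fib x₀ (loopMem x₀ H) t → Prop) :
    (∀ q ∈ Subtype.val ⁻¹' whBasic x₀ (loopMem x₀ H) ⟨t, δ⟩ V, R q) ↔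
      ∀ β : Path t t, range ⇑β ⊆ V → R (mkFib x₀ (loopMem x₀ H) (δ.trans β)) := by
  refine ⟨fun h β hβ => h _ ⟨t, β, hβ, rfl⟩, fun h q hq => ?_⟩
  obtain ⟨δ', rfl⟩ := fib_ind q
  obtain ⟨β, hβ, hδ'⟩ := (mkX_mem_whBasic_iff δ δ' V).mp hq
  have hq : mkFib x₀ (loopMem x₀ H) δ' = mkFib x₀ (loopMem x₀ H) (δ.trans β) := Subtype.ext hδ'
  exact hq ▸ h β hβ

lemma whBasic_mono (ε : PPath X x₀) {U V : Set X} (h : U ⊆ V) :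
    whBasic x₀ (loopMem x₀ H) ε U ⊆ whBasic x₀ (loopMem x₀ H) ε V := by
  rintro q ⟨z, β, hβ, rfl⟩
  exact ⟨z, β, hβ.trans h, rfl⟩

lemma mem_whBasic_self {t : X} (δ : Path x₀ t) {U : Set X} (h : t ∈ U) :
    mkX x₀ (loopMem x₀ H) ⟨t, δ⟩ ∈ whBasic x₀ (loopMem x₀ H) ⟨t, δ⟩ U :=
  (mkX_mem_whBasic_iff δ δ U).mpr
    ⟨Path.refl t, range_subset_iff.mpr fun _ => h, mkX_eq_of_pathHom_eq (by simp)⟩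

lemma target_mem_of_mkX_mem_whBasic {ε : PPath X x₀} {U : Set X} {t : X} {δ : Path x₀ t}
    (h : mkX x₀ (loopMem x₀ H) ⟨t, δ⟩ ∈ whBasic x₀ (loopMem x₀ H) ε U) : t ∈ U := by
  obtain ⟨β, hβ, -⟩ := (mkX_mem_whBasic_iff ε.path δ U).mp h
  simpa using hβ (mem_range_self 1)

lemma whBasic_subset_of_mkX_mem {ε : PPath X x₀} {U : Set X} {t : X} {δ : Path x₀ t}
    (h : mkX x₀ (loopMem x₀ H) ⟨t, δ⟩ ∈ whBasic x₀ (loopMem x₀ H) ε U) :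
    whBasic x₀ (loopMem x₀ H) ⟨t, δ⟩ U ⊆ whBasic x₀ (loopMem x₀ H) ε U := by
  obtain ⟨β, hβ, hδ⟩ := (mkX_mem_whBasic_iff ε.path δ U).mp h
  rintro q ⟨z, β', hβ', rfl⟩
  refine ⟨z, β.trans β', Path.trans_range β β' ▸ union_subset hβ hβ', ?_⟩
  exact (mkX_trans_congr hδ β').trans (mkX_eq_of_pathHom_eq (by simp))

lemma isTopologicalBasis_whBasic :
    IsTopologicalBasis { S | ∃ (α : PPath X x₀) (U : Set X), IsOpen U ∧ α.target ∈ U ∧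
      S = whBasic x₀ (loopMem x₀ H) α U } where
  exists_subset_inter := by
    rintro _ ⟨ε₁, U₁, hU₁, -, rfl⟩ _ ⟨ε₂, U₂, hU₂, -, rfl⟩ q ⟨hq₁, hq₂⟩
    obtain ⟨⟨t, δ⟩, rfl⟩ := Quot.exists_rep q
    have ht : t ∈ U₁ ∩ U₂ :=
      ⟨target_mem_of_mkX_mem_whBasic hq₁, target_mem_of_mkX_mem_whBasic hq₂⟩
    refine ⟨_, ⟨⟨t, δ⟩, U₁ ∩ U₂, hU₁.inter hU₂, ht, rfl⟩, mem_whBasic_self δ ht, ?_⟩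
    exact subset_inter
      ((whBasic_mono _ inter_subset_left).trans (whBasic_subset_of_mkX_mem hq₁))
      ((whBasic_mono _ inter_subset_right).trans (whBasic_subset_of_mkX_mem hq₂))
  sUnion_eq := by
    refine eq_univ_of_forall fun q => ?_
    obtain ⟨⟨t, δ⟩, rfl⟩ := Quot.exists_rep q
    exact ⟨_, ⟨⟨t, δ⟩, univ, isOpen_univ, mem_univ t, rfl⟩, mem_whBasic_self δ (mem_univ t)⟩
  eq_generateFrom := rfl

lemma nhds_mkX_hasBasis {t : X} (δ : Path x₀ t) :
    (𝓝 (mkX x₀ (loopMem x₀ H) ⟨t, δ⟩)).HasBasis (fun V : Set X => IsOpen V ∧ t ∈ V)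
      (whBasic x₀ (loopMem x₀ H) ⟨t, δ⟩) := by
  refine isTopologicalBasis_whBasic.nhds_hasBasis.to_hasBasis ?_ ?_
  · rintro _ ⟨⟨ε, U, hU, -, rfl⟩, hδ⟩
    exact ⟨U, ⟨hU, target_mem_of_mkX_mem_whBasic hδ⟩, whBasic_subset_of_mkX_mem hδ⟩
  · rintro V ⟨hV, htV⟩
    exact ⟨_, ⟨⟨⟨t, δ⟩, V, hV, htV, rfl⟩, mem_whBasic_self δ htV⟩, subset_rfl⟩

lemma nhds_mkFib_hasBasis {t : X} (δ : Path x₀ t) :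
    (𝓝 (mkFib x₀ (loopMem x₀ H) δ)).HasBasis (fun V : Set X => IsOpen V ∧ t ∈ V)
      (fun V => Subtype.val ⁻¹' whBasic x₀ (loopMem x₀ H) ⟨t, δ⟩ V) := by
  rw [nhds_induced]
  exact (nhds_mkX_hasBasis δ).comap _

lemma mkX_conj_eq_iff {x y : X} (lam : Path x₀ x) (α : Path x y) (β : Path y y)
    (γ : Path x x) :
    mkX x₀ (loopMem x₀ H) ⟨x, ((lam.trans α).trans β).trans α.symm⟩ =
        mkX x₀ (loopMem x₀ H) ⟨x, lam.trans γ⟩ ↔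
      fl (lam.trans (((α.trans (β.trans α.symm)).trans γ.symm).trans lam.symm)) ∈ H := by
  rw [mkX_eq_iff]
  convert Iff.rfl using 2
  exact fl_eq_iff.mpr (by simp)

end Whisker

noncomputable def IsHSLTPathAt (x₀ : X) (H : Subgroup (FundamentalGroup X x₀)) {x y : X}
    (lam : Path x₀ x) (α : Path x y) : Prop :=
  ∀ U : Set X, IsOpen U → x ∈ U →
    ∃ V : Set X, IsOpen V ∧ y ∈ V ∧
      ∀ β : Path y y, range ⇑β ⊆ V →
        ∃ γ : Path x x, range ⇑γ ⊆ U ∧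
          fl (lam.trans ((((α.trans (β.trans α.symm)).trans γ.symm)).trans lam.symm)) ∈ H

lemma isHSLTPath_iff_forall {x₀ x y : X} {H : Subgroup (FundamentalGroup X x₀)}
    (α : Path x y) : IsHSLTPath x₀ H α ↔ ∀ lam : Path x₀ x, IsHSLTPathAt x₀ H lam α :=
  Iff.rfl

lemma continuousAt_mkFib_iff_isHSLTPathAt {x₀ x y : X} {H : Subgroup (FundamentalGroup X x₀)}
    (α : Path x y) {f : Fib x₀ (loopMem x₀ H) y → Fib x₀ (loopMem x₀ H) x}
    (hf : ∀ δ : Path x₀ y,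
      f (mkFib x₀ (loopMem x₀ H) δ) = mkFib x₀ (loopMem x₀ H) (δ.trans α.symm))
    (lam : Path x₀ x) :
    ContinuousAt f (mkFib x₀ (loopMem x₀ H) (lam.trans α)) ↔ IsHSLTPathAt x₀ H lam α := by
  have hlam : f (mkFib x₀ (loopMem x₀ H) (lam.trans α)) = mkFib x₀ (loopMem x₀ H) lam :=
    (hf _).trans (Subtype.ext (mkX_eq_of_pathHom_eq (by simp)))
  rw [ContinuousAt, hlam, (nhds_mkFib_hasBasis _).tendsto_iff (nhds_mkFib_hasBasis lam)]
  unfold IsHSLTPathAt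
  refine forall_congr' fun U => and_imp.trans <| forall₂_congr fun _ _ =>
    exists_congr fun V => and_assoc.trans <| and_congr_right fun _ => and_congr_right fun _ => ?_
  rw [forall_fib_mem_whBasic_iff]
  refine forall₂_congr fun β _ => ?_
  rw [mem_preimage, hf, mkFib, mkX_mem_whBasic_iff]
  exact exists_congr fun γ => and_congr_right fun _ => mkX_conj_eq_iff lam α β γ

theorem statement8_general {X : Type u} [TopologicalSpace X] (x₀ : X)
    (H : Subgroup (FundamentalGroup X x₀)) :
    IsHSLTSpace x₀ H ↔
      ∀ (x y : X) (α : Path x y)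
        (f : Fib x₀ (loopMem x₀ H) y → Fib x₀ (loopMem x₀ H) x),
        (∀ δ : Path x₀ y,
          f (mkFib x₀ (loopMem x₀ H) δ) = mkFib x₀ (loopMem x₀ H) (δ.trans α.symm)) →
        Continuous f := by
  constructor
  · intro hS x y α f hf
    refine continuous_iff_continuousAt.mpr fun q => ?_
    obtain ⟨δ, rfl⟩ := fib_ind q
    have hδ : mkFib x₀ (loopMem x₀ H) δ = mkFib x₀ (loopMem x₀ H) ((δ.trans α.symm).trans α) :=
      Subtype.ext (mkX_eq_of_pathHom_eq (by simp))
    rw [hδ, continuousAt_mkFib_iff_isHSLTPathAt α hf]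
    exact (isHSLTPath_iff_forall α).mp (hS x y α) _
  · intro hc x y α
    refine (isHSLTPath_iff_forall α).mpr fun lam => ?_
    obtain ⟨f, hf⟩ := exists_fib_transport (H := H) α
    exact (continuousAt_mkFib_iff_isHSLTPathAt α hf lam).mp (hc x y α f hf).continuousAt

/-- Let `H` be a subgroup of `π₁(X, x₀)`. Then `X` is an `H`-SLT space if
and only if for every path `α` in `X` from `x` to `y`, the map
`f^α_H : (p_H⁻¹(y))^wh → (p_H⁻¹(x))^wh`, `[δ]_H ↦ [δ⋆α⁻¹]_H`, is continuous. -/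
theorem statement8 {X : Type u} [TopologicalSpace X] [PathConnectedSpace X] (x₀ : X)
    (H : Subgroup (FundamentalGroup X x₀)) :
    IsHSLTSpace x₀ H ↔
      ∀ (x y : X) (α : Path x y)
        (f : Fib x₀ (loopMem x₀ H) y → Fib x₀ (loopMem x₀ H) x),
        (∀ δ : Path x₀ y,
          f (mkFib x₀ (loopMem x₀ H) δ) = mkFib x₀ (loopMem x₀ H) (δ.trans α.symm)) →
        Continuous f :=
  statement8_general x₀ H

end SLTF
end
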